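/- arXiv:2603.10837 — 2 statements merged into one kernel-verified Lean document; each statement's English description precedes it below -/
import Mathlib

section
/- Let C be a reduced combinatorial code on n neurons, let i ∈ [n], and let C^(i) = f_i(C) ⊆ 2^[2n] be the image of the i-th covering map. Then d(C) − 1 ≤ d(C^(i)) ≤ d(C), where d denotes the defect. -/
section
variable {α : Type*} [Fintype α] [DecidableEq α]

/-- The trunk of `τ` in the code `C`: all codewords containing `τ`. -/
def trunk (C : Finset (Finset α)) (τ : Finset α) : Finset (Finset α) :=
  C.filter (fun σ => τ ⊆ σ)

/-- `t(C)`: the number of distinct nonempty trunks of `C`. -/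
def trunkCount (C : Finset (Finset α)) : ℕ :=
  (((Finset.univ : Finset (Finset α)).image (fun τ => trunk C τ)).filter
    (fun T => T ≠ ∅)).card

/-- The defect of a code: `d(C) = t(C) - |C|`. -/
def defect (C : Finset (Finset α)) : ℤ :=
  (trunkCount C : ℤ) - (C.card : ℤ)

/-- The root of a family of subsets: the intersection of all its members. -/
def root (S : Finset (Finset α)) : Finset α :=
  S.inf id

/-- A code is reduced if it has no trivial neurons (empty trunks) and no
redundant neurons. -/
def Reduced (C : Finset (Finset α)) : Prop :=
  (∀ i : α, (trunk C {i}).Nonempty) ∧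
    ∀ i : α, ¬ ∃ σ : Finset α, i ∉ σ ∧ trunk C {i} = trunk C σ

end

/-- The `i`-th covering map `f_i : C → 2^[2n]`, with ground set `[2n]` encoded
as `Fin n ⊕ Fin n` (`inl` for the original neurons, `inr j` for `n + j`). -/
def coveringMap {n : ℕ} (C : Finset (Finset (Fin n))) (i : Fin n)
    (c : Finset (Fin n)) : Finset (Fin n ⊕ Fin n) :=
  (c.erase i).image Sum.inl ∪
    ((Finset.univ.filter (fun j : Fin n =>
        ({i, j} : Finset (Fin n)) ⊆ c ∧ trunk C {i, j} ≠ trunk C {i})).image Sum.inr)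

/-- The `i`-th covered code `C^(i)`, the image of `C` under the `i`-th covering
map. -/
def coveredCode {n : ℕ} (C : Finset (Finset (Fin n))) (i : Fin n) :
    Finset (Finset (Fin n ⊕ Fin n)) :=
  C.image (coveringMap C i)


namespace CoveredCodeProof

open Finset Sum

variable {n : ℕ}

lemma mem_trunk_iff {α : Type*} [Fintype α] [DecidableEq α]
    {C : Finset (Finset α)} {τ c : Finset α} :
    c ∈ trunk C τ ↔ c ∈ C ∧ τ ⊆ c := Finset.mem_filter

lemma trunk_singleton_subset {α : Type*} [Fintype α] [DecidableEq α]
    {C : Finset (Finset α)} {τ : Finset α} {j : α} (hj : j ∈ τ) :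
    trunk C τ ⊆ trunk C {j} := by
  intro c hc
  rw [mem_trunk_iff] at hc ⊢
  exact ⟨hc.1, Finset.singleton_subset_iff.2 (hc.2 hj)⟩

lemma inl_mem_coveringMap {C : Finset (Finset (Fin n))} {i : Fin n}
    {c : Finset (Fin n)} {a : Fin n} :
    Sum.inl a ∈ coveringMap C i c ↔ a ∈ c ∧ a ≠ i := by
  simp [coveringMap, Finset.mem_erase, and_comm]

lemma inr_mem_coveringMap {C : Finset (Finset (Fin n))} {i : Fin n}
    {c : Finset (Fin n)} {b : Fin n} :
    Sum.inr b ∈ coveringMap C i c ↔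
      (({i, b} : Finset (Fin n)) ⊆ c ∧ trunk C {i, b} ≠ trunk C {i}) := by
  simp [coveringMap]

/-- `trunk C {i,j} = trunk C {i}` iff every codeword containing `i` contains `j`. -/
lemma trunk_pair_eq_iff {C : Finset (Finset (Fin n))} {i j : Fin n} :
    trunk C {i, j} = trunk C {i} ↔ ∀ x ∈ C, i ∈ x → j ∈ x := by
  constructor
  · intro h x hx hix
    have hxi : x ∈ trunk C {i} := mem_trunk_iff.2 ⟨hx, Finset.singleton_subset_iff.2 hix⟩
    rw [← h, mem_trunk_iff] at hxi
    exact hxi.2 (by simp)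
  · intro h
    ext x
    rw [mem_trunk_iff, mem_trunk_iff, Finset.insert_subset_iff, Finset.singleton_subset_iff,
      Finset.singleton_subset_iff]
    exact ⟨fun ⟨h1, h2, _⟩ => ⟨h1, h2⟩, fun ⟨h1, h2⟩ => ⟨h1, h2, h x h1 h2⟩⟩

/-- If `i ∈ τ` and no pair witness exists, the trunk of `τ` collapses to `trunk C {i}`. -/
lemma trunk_eq_trunk_singleton {C : Finset (Finset (Fin n))} {i : Fin n} {τ : Finset (Fin n)}
    (hi : i ∈ τ) (h : ∀ j ∈ τ, trunk C {i, j} = trunk C {i}) :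
    trunk C τ = trunk C {i} := by
  ext c
  rw [mem_trunk_iff, mem_trunk_iff, Finset.singleton_subset_iff]
  constructor
  · exact fun ⟨h1, h2⟩ => ⟨h1, h2 hi⟩
  · rintro ⟨h1, h2⟩
    refine ⟨h1, fun j hj => ?_⟩
    exact (trunk_pair_eq_iff.1 (h j hj)) c h1 h2

/-- A "good" representative: either avoids `i`, or contains `i` together with a witness pair. -/
def Good (C : Finset (Finset (Fin n))) (i : Fin n) (σ : Finset (Fin n)) : Prop :=
  i ∉ σ ∨ (i ∈ σ ∧ ∃ j ∈ σ, trunk C {i, j} ≠ trunk C {i})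

/-- For a good `σ`, the image of its trunk is a trunk of the covered code. -/
lemma image_trunk_good {C : Finset (Finset (Fin n))} {i : Fin n} {σ : Finset (Fin n)}
    (h : Good C i σ) :
    ∃ τ' : Finset (Fin n ⊕ Fin n),
      (trunk C σ).image (coveringMap C i) = trunk (coveredCode C i) τ' := by
  rcases h with h | ⟨hiσ, j, hjσ, hj⟩
  · refine ⟨σ.image Sum.inl, ?_⟩
    simp only [trunk, coveredCode, Finset.filter_image]
    congr 1
    apply Finset.filter_congr
    intro c _
    simp only [Finset.image_subset_iff]
    constructor
    · intro hs a ha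
      exact inl_mem_coveringMap.2 ⟨hs ha, fun hai => h (hai ▸ ha)⟩
    · intro hs a ha
      exact (inl_mem_coveringMap.1 (hs a ha)).1
  · refine ⟨((σ.erase i).image Sum.inl) ∪ {Sum.inr j}, ?_⟩
    simp only [trunk, coveredCode, Finset.filter_image]
    congr 1
    apply Finset.filter_congr
    intro c _
    rw [Finset.union_subset_iff, Finset.singleton_subset_iff, Finset.image_subset_iff]
    constructor
    · intro hs
      constructor
      · intro a ha
        rw [Finset.mem_erase] at ha
        exact inl_mem_coveringMap.2 ⟨hs ha.2, ha.1⟩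
      · refine inr_mem_coveringMap.2 ⟨?_, hj⟩
        rw [Finset.insert_subset_iff, Finset.singleton_subset_iff]
        exact ⟨hs hiσ, hs hjσ⟩
    · intro hs
      have hij : ({i, j} : Finset (Fin n)) ⊆ c := (inr_mem_coveringMap.1 hs.2).1
      intro a ha
      by_cases hai : a = i
      · exact hai ▸ hij (by simp)
      · exact (inl_mem_coveringMap.1 (hs.1 a (Finset.mem_erase.2 ⟨hai, ha⟩))).1

/-- For reduced `C` and good `σ`, the trunk of `σ` differs from `trunk C {i}`. -/
lemma trunk_good_ne {C : Finset (Finset (Fin n))} {i : Fin n} {σ : Finset (Fin n)}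
    (hC : Reduced C) (h : Good C i σ) : trunk C σ ≠ trunk C {i} := by
  rcases h with h | ⟨hiσ, j, hjσ, hj⟩
  · exact fun he => hC.2 i ⟨σ, h, he.symm⟩
  · intro he
    apply hj
    have h1 : trunk C σ ⊆ trunk C {i, j} := by
      intro c hc
      rw [mem_trunk_iff] at hc ⊢
      refine ⟨hc.1, ?_⟩
      rw [Finset.insert_subset_iff, Finset.singleton_subset_iff]
      exact ⟨hc.2 hiσ, hc.2 hjσ⟩
    have h2 : trunk C {i, j} ⊆ trunk C {i} := trunk_singleton_subset (by simp)
    rw [he] at h1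
    exact Finset.Subset.antisymm h2 h1

/-- The special collision structure. -/
def IsColl (C : Finset (Finset (Fin n))) (i : Fin n) (d : Finset (Fin n)) : Prop :=
  d ∈ C ∧ i ∈ d ∧ d.erase i ∈ C ∧ ∀ j ∈ d, ∀ x ∈ C, i ∈ x → j ∈ x

lemma erase_eq_of_cov_eq {C : Finset (Finset (Fin n))} {i : Fin n} {c c' : Finset (Fin n)}
    (h : coveringMap C i c = coveringMap C i c') : c.erase i = c'.erase i := by
  ext a
  rw [Finset.mem_erase, Finset.mem_erase, and_comm, and_comm (a := a ≠ i),
    ← inl_mem_coveringMap (C := C), ← inl_mem_coveringMap (C := C), h]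

lemma collision_lemma {C : Finset (Finset (Fin n))} {i : Fin n} {c c' : Finset (Fin n)}
    (hc : c ∈ C) (hc' : c' ∈ C) (h : coveringMap C i c = coveringMap C i c') (hne : c ≠ c') :
    (i ∈ c ∧ c' = c.erase i ∧ IsColl C i c) ∨ (i ∈ c' ∧ c = c'.erase i ∧ IsColl C i c') := by
  have he := erase_eq_of_cov_eq h
  have key : ∀ (u v : Finset (Fin n)), u ∈ C → v ∈ C →
      coveringMap C i u = coveringMap C i v → i ∈ u → i ∉ v →
      (i ∈ u ∧ v = u.erase i ∧ IsColl C i u) := by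
    intro u v hu hv huv hiu hiv
    have hev : v.erase i = v := Finset.erase_eq_of_notMem hiv
    have hveq : v = u.erase i := by rw [← hev, ← erase_eq_of_cov_eq huv]
    have hall : ∀ j ∈ u, ∀ x ∈ C, i ∈ x → j ∈ x := by
      intro j hj x hx hix
      by_cases hji : j = i
      · exact hji ▸ hix
      · have hnr : Sum.inr j ∉ coveringMap C i v := by
          rw [inr_mem_coveringMap]
          rintro ⟨hsub, -⟩
          exact hiv (hsub (by simp))
        rw [← huv, inr_mem_coveringMap] at hnr
        have hsub : ({i, j} : Finset (Fin n)) ⊆ u := by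
          rw [Finset.insert_subset_iff, Finset.singleton_subset_iff]
          exact ⟨hiu, hj⟩
        have := not_and.mp hnr hsub
        rw [not_not] at this
        exact trunk_pair_eq_iff.1 this x hx hix
    exact ⟨hiu, hveq, hu, hiu, hveq ▸ hv, hall⟩
  by_cases h1 : i ∈ c <;> by_cases h2 : i ∈ c'
  · exfalso
    apply hne
    have : c = insert i (c.erase i) := (Finset.insert_erase h1).symm
    rw [this, he, Finset.insert_erase h2]
  · exact Or.inl (key c c' hc hc' h h1 h2)
  · exact Or.inr (key c' c hc' hc h.symm h2 h1)
  · exfalso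
    apply hne
    rw [← Finset.erase_eq_of_notMem h1, ← Finset.erase_eq_of_notMem h2, he]

lemma isColl_unique {C : Finset (Finset (Fin n))} {i : Fin n} {d d' : Finset (Fin n)}
    (h : IsColl C i d) (h' : IsColl C i d') : d = d' := by
  apply Finset.Subset.antisymm
  · exact fun j hj => h.2.2.2 j hj d' h'.1 h'.2.1
  · exact fun j hj => h'.2.2.2 j hj d h.1 h.2.1

/-- the image cardinality drops by at most one. -/
lemma card_coveredCode {C : Finset (Finset (Fin n))} {i : Fin n} :
    C.card - 1 ≤ (coveredCode C i).card ∧ (coveredCode C i).card ≤ C.card := by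
  refine ⟨?_, Finset.card_image_le⟩
  by_cases hinj : Set.InjOn (coveringMap C i) C
  · rw [coveredCode, Finset.card_image_of_injOn hinj]
    omega
  · rw [Set.InjOn] at hinj
    push_neg at hinj
    obtain ⟨c, hc, c', hc', heq, hne⟩ := hinj
    have hex : ∃ d, IsColl C i d := by
      rcases collision_lemma hc hc' heq hne with ⟨-, -, h⟩ | ⟨-, -, h⟩
      exacts [⟨_, h⟩, ⟨_, h⟩]
    obtain ⟨d, hd⟩ := hex
    have hinj2 : Set.InjOn (coveringMap C i) (C.erase d) := by
      intro a ha b hb hab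
      by_contra hne2
      rw [Finset.mem_coe] at ha hb
      rcases collision_lemma (Finset.mem_of_mem_erase ha) (Finset.mem_of_mem_erase hb)
          hab hne2 with ⟨-, -, ha'⟩ | ⟨-, -, hb'⟩
      · exact (Finset.mem_erase.1 ha).1 (isColl_unique ha' hd)
      · exact (Finset.mem_erase.1 hb).1 (isColl_unique hb' hd)
    calc C.card - 1 = (C.erase d).card := (Finset.card_erase_of_mem hd.1).symm
      _ = ((C.erase d).image (coveringMap C i)).card :=
          (Finset.card_image_of_injOn hinj2).symm
      _ ≤ (coveredCode C i).card :=
          Finset.card_le_card (Finset.image_subset_image (Finset.erase_subset d C))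

/-- Images of distinct trunks (other than `trunk C {i}`) stay distinct. -/
lemma image_trunk_subset {C : Finset (Finset (Fin n))} {i : Fin n}
    {τ₁ τ₂ : Finset (Fin n)} (h2 : trunk C τ₂ ≠ trunk C {i})
    (h : (trunk C τ₁).image (coveringMap C i) ⊆ (trunk C τ₂).image (coveringMap C i)) :
    trunk C τ₁ ⊆ trunk C τ₂ := by
  intro c hc
  have hcC : c ∈ C := (mem_trunk_iff.1 hc).1
  obtain ⟨c', hc', heq⟩ := Finset.mem_image.1 (h (Finset.mem_image_of_mem _ hc))
  obtain ⟨hc'C, hτ₂⟩ := mem_trunk_iff.1 hc'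
  by_cases hcc : c = c'
  · exact hcc ▸ hc'
  · rcases collision_lemma hcC hc'C heq.symm hcc with ⟨hic, hce, hcoll⟩ | ⟨hic', hce, hcoll⟩
    · rw [mem_trunk_iff]
      refine ⟨hcC, hτ₂.trans ?_⟩
      rw [hce]
      exact Finset.erase_subset i c
    · by_cases hiτ : i ∈ τ₂
      · exfalso
        apply h2
        apply Finset.Subset.antisymm (trunk_singleton_subset hiτ)
        intro x hx
        obtain ⟨hxC, hix⟩ := mem_trunk_iff.1 hx
        rw [Finset.singleton_subset_iff] at hix
        rw [mem_trunk_iff]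
        exact ⟨hxC, fun j hj => hcoll.2.2.2 j (hτ₂ hj) x hxC hix⟩
      · rw [mem_trunk_iff]
        refine ⟨hcC, ?_⟩
        rw [hce]
        intro a ha
        exact Finset.mem_erase.2 ⟨fun hai => hiτ (hai ▸ ha), hτ₂ ha⟩

/-- Every nonempty trunk of the covered code is the image of the trunk of a good set. -/
lemma exists_good_trunk {C : Finset (Finset (Fin n))} {i : Fin n}
    (τ' : Finset (Fin n ⊕ Fin n)) (hne : (trunk (coveredCode C i) τ').Nonempty) :
    ∃ σ : Finset (Fin n), Good C i σ ∧ (trunk C σ).Nonempty ∧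
      (trunk C σ).image (coveringMap C i) = trunk (coveredCode C i) τ' := by
  obtain ⟨w, hw⟩ := hne
  obtain ⟨hwC, hτ'⟩ := mem_trunk_iff.1 hw
  obtain ⟨c₀, hc₀C, rfl⟩ := Finset.mem_image.1 hwC
  have hfactL : ∀ a : Fin n, Sum.inl a ∈ τ' → a ∈ c₀ ∧ a ≠ i :=
    fun a ha => inl_mem_coveringMap.1 (hτ' ha)
  have hfactR : ∀ b : Fin n, Sum.inr b ∈ τ' →
      ({i, b} : Finset (Fin n)) ⊆ c₀ ∧ trunk C {i, b} ≠ trunk C {i} :=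
    fun b hb => inr_mem_coveringMap.1 (hτ' hb)
  have main : ∀ σ : Finset (Fin n), (∀ c : Finset (Fin n), σ ⊆ c ↔ τ' ⊆ coveringMap C i c) →
      (trunk C σ).Nonempty ∧
        (trunk C σ).image (coveringMap C i) = trunk (coveredCode C i) τ' := by
    intro σ key
    constructor
    · refine ⟨c₀, ?_⟩
      rw [mem_trunk_iff]
      exact ⟨hc₀C, (key c₀).2 hτ'⟩
    · simp only [trunk, coveredCode, Finset.filter_image]
      congr 1
      exact Finset.filter_congr (fun c _ => key c)
  classical
  set A : Finset (Fin n) := Finset.univ.filter (fun a => Sum.inl a ∈ τ') with hA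
  set B : Finset (Fin n) := Finset.univ.filter (fun b => Sum.inr b ∈ τ') with hB
  have hmemA : ∀ a : Fin n, a ∈ A ↔ Sum.inl a ∈ τ' := by intro a; simp [hA]
  have hmemB : ∀ b : Fin n, b ∈ B ↔ Sum.inr b ∈ τ' := by intro b; simp [hB]
  by_cases hBcase : ∃ b, Sum.inr b ∈ τ'
  · obtain ⟨b₀, hb₀⟩ := hBcase
    have key : ∀ c : Finset (Fin n), insert i (A ∪ B) ⊆ c ↔ τ' ⊆ coveringMap C i c := by
      intro c
      constructor
      · intro hs x hx
        rcases x with a | b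
        · exact inl_mem_coveringMap.2 ⟨hs (by simp [Finset.mem_insert, hmemA a, hx]),
            (hfactL a hx).2⟩
        · refine inr_mem_coveringMap.2 ⟨?_, (hfactR b hx).2⟩
          rw [Finset.insert_subset_iff, Finset.singleton_subset_iff]
          exact ⟨hs (Finset.mem_insert_self _ _),
            hs (by simp [Finset.mem_insert, hmemB b, hx])⟩
      · intro hs x hx
        rcases Finset.mem_insert.1 hx with rfl | hx'
        · exact (inr_mem_coveringMap.1 (hs hb₀)).1 (by simp)
        · rcases Finset.mem_union.1 hx' with hxA | hxB
          · exact (inl_mem_coveringMap.1 (hs ((hmemA x).1 hxA))).1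
          · exact ((inr_mem_coveringMap.1 (hs ((hmemB x).1 hxB))).1) (by simp)
    refine ⟨insert i (A ∪ B), Or.inr ⟨Finset.mem_insert_self _ _,
      b₀, by simp [Finset.mem_insert, hmemB b₀, hb₀], (hfactR b₀ hb₀).2⟩,
      main _ key⟩
  · push_neg at hBcase
    have key : ∀ c : Finset (Fin n), A ⊆ c ↔ τ' ⊆ coveringMap C i c := by
      intro c
      constructor
      · intro hs x hx
        rcases x with a | b
        · exact inl_mem_coveringMap.2 ⟨hs ((hmemA a).2 hx), (hfactL a hx).2⟩
        · exact absurd hx (hBcase b)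
      · intro hs a ha
        exact (inl_mem_coveringMap.1 (hs ((hmemA a).1 ha))).1
    exact ⟨A, Or.inl (fun hiA => (hfactL i ((hmemA i).1 hiA)).2 rfl), main _ key⟩

/-- The trunk count drops by exactly one. -/
lemma trunkCount_coveredCode {C : Finset (Finset (Fin n))} {i : Fin n} (hC : Reduced C) :
    trunkCount (coveredCode C i) + 1 = trunkCount C := by
  classical
  set NT : Finset (Finset (Finset (Fin n))) :=
    ((Finset.univ : Finset (Finset (Fin n))).image (fun τ => trunk C τ)).filter
      (fun T => T ≠ ∅) with hNT
  set NT' : Finset (Finset (Finset (Fin n ⊕ Fin n))) :=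
    ((Finset.univ : Finset (Finset (Fin n ⊕ Fin n))).image
      (fun τ => trunk (coveredCode C i) τ)).filter (fun T => T ≠ ∅) with hNT'
  have hmemNT : ∀ T, T ∈ NT ↔ (∃ τ, trunk C τ = T) ∧ T ≠ ∅ := by
    intro T; simp [hNT]
  have hmemNT' : ∀ T, T ∈ NT' ↔ (∃ τ, trunk (coveredCode C i) τ = T) ∧ T ≠ ∅ := by
    intro T; simp [hNT']
  have hiNT : trunk C {i} ∈ NT := by
    rw [hmemNT]
    exact ⟨⟨{i}, rfl⟩, Finset.nonempty_iff_ne_empty.1 (hC.1 i)⟩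
  -- a good representative for each trunk other than `trunk C {i}`
  have hrep : ∀ T ∈ NT.erase (trunk C {i}), ∃ σ, Good C i σ ∧ trunk C σ = T := by
    intro T hT
    obtain ⟨hTne, hTNT⟩ := Finset.mem_erase.1 hT
    obtain ⟨⟨τ, hτ⟩, -⟩ := (hmemNT T).1 hTNT
    by_cases hg : Good C i τ
    · exact ⟨τ, hg, hτ⟩
    · exfalso
      rw [Good] at hg
      push_neg at hg
      obtain ⟨hiτ, hg2⟩ := hg
      have hall : ∀ j ∈ τ, trunk C {i, j} = trunk C {i} := by
        intro j hj
        by_contra hne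
        exact hne (hg2 hiτ j hj)
      exact hTne (hτ ▸ trunk_eq_trunk_singleton hiτ hall)
  have hcard : (NT.erase (trunk C {i})).card = NT'.card := by
    apply Finset.card_bij (fun T _ => T.image (coveringMap C i))
    · intro T hT
      obtain ⟨σ, hgood, rfl⟩ := hrep T hT
      obtain ⟨τ', hτ'⟩ := image_trunk_good hgood
      rw [hmemNT', hτ']
      refine ⟨⟨τ', rfl⟩, ?_⟩
      rw [← hτ']
      apply Finset.nonempty_iff_ne_empty.1
      apply Finset.Nonempty.image
      rw [Finset.nonempty_iff_ne_empty]
      exact ((hmemNT _).1 (Finset.mem_of_mem_erase hT)).2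
    · intro T₁ hT₁ T₂ hT₂ heq
      obtain ⟨σ₁, hg₁, rfl⟩ := hrep T₁ hT₁
      obtain ⟨σ₂, hg₂, rfl⟩ := hrep T₂ hT₂
      have hne₁ : trunk C σ₁ ≠ trunk C {i} := (Finset.mem_erase.1 hT₁).1
      have hne₂ : trunk C σ₂ ≠ trunk C {i} := (Finset.mem_erase.1 hT₂).1
      exact Finset.Subset.antisymm
        (image_trunk_subset hne₂ (le_of_eq heq))
        (image_trunk_subset hne₁ (le_of_eq heq.symm))
    · intro T' hT'
      obtain ⟨⟨τ', hτ'⟩, hT'ne⟩ := (hmemNT' T').1 hT'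
      have hne : (trunk (coveredCode C i) τ').Nonempty := by
        rw [hτ']
        exact Finset.nonempty_iff_ne_empty.2 hT'ne
      obtain ⟨σ, hgood, hσne, hσeq⟩ := exists_good_trunk τ' hne
      refine ⟨trunk C σ, ?_, by rw [hσeq, hτ']⟩
      rw [Finset.mem_erase, hmemNT]
      exact ⟨trunk_good_ne hC hgood, ⟨σ, rfl⟩, Finset.nonempty_iff_ne_empty.1 hσne⟩
  have h1 : NT.card = trunkCount C := rfl
  have h2 : NT'.card = trunkCount (coveredCode C i) := rfl
  rw [← h1, ← h2, ← hcard, Finset.card_erase_of_mem hiNT]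
  have : 1 ≤ NT.card := Finset.card_pos.2 ⟨_, hiNT⟩
  omega

end CoveredCodeProof

/-- For a reduced code `C` and a neuron `i`, the defect decreases by exactly
`0` or `1` under the covering map: `d(C) - 1 ≤ d(C^(i)) ≤ d(C)`. -/
theorem defect_of_coveredCode (n : ℕ) (C : Finset (Finset (Fin n)))
    (i : Fin n) (hC : Reduced C) :
    defect C - 1 ≤ defect (coveredCode C i) ∧
      defect (coveredCode C i) ≤ defect C := by
  have ht := CoveredCodeProof.trunkCount_coveredCode (i := i) hC
  have hcard := CoveredCodeProof.card_coveredCode (C := C) (i := i)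
  obtain ⟨hc1, hc2⟩ := hcard
  simp only [defect]
  omega
end

section
/- Let C be a combinatorial code on n neurons in which the neuron n is redundant to some σ ⊆ [n−1], and let C' = {c ∖ {n} : c ∈ C} be the code on n−1 neurons obtained by deleting neuron n. If there is a Boolean matrix factorization from C onto a code D on k neurons, then there is a Boolean matrix factorization from C' onto D. -/
section
variable {α β : Type*} [Fintype α] [DecidableEq α] [Fintype β] [DecidableEq β]

/-- There is a Boolean matrix factorization from `C` (on neurons `α`) onto `D`
(on neurons `β`): there are sets `τ_j ⊆ α` (`j : β`) such that the morphism
`g(c) = {j : τ_j ⊆ c}` maps `C` onto `D` and `⋃_{j ∈ g(c)} τ_j = c` for every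
`c ∈ C`. -/
def IsBMF (C : Finset (Finset α)) (D : Finset (Finset β)) : Prop :=
  ∃ τ : β → Finset α,
    C.image (fun c => Finset.univ.filter (fun j => τ j ⊆ c)) = D ∧
      ∀ c ∈ C, (Finset.univ.filter (fun j => τ j ⊆ c)).sup τ = c

end

/-- Deleting the last neuron from a codeword on `n + 1` neurons. -/
def deleteLast {n : ℕ} (c : Finset (Fin (n + 1))) : Finset (Fin n) :=
  Finset.univ.filter (fun x : Fin n => x.castSucc ∈ c)

lemma mem_deleteLast {n : ℕ} (c : Finset (Fin (n+1))) (x : Fin n) :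
    x ∈ deleteLast c ↔ x.castSucc ∈ c := by
  simp [deleteLast]

lemma subset_iff_deleteLast {n : ℕ} {s c : Finset (Fin (n+1))} (hs : Fin.last n ∉ s) :
    s ⊆ c ↔ deleteLast s ⊆ deleteLast c := by
  constructor
  · intro h x hx
    rw [mem_deleteLast] at hx ⊢
    exact h hx
  · intro h y hy
    rcases Fin.eq_castSucc_or_eq_last y with ⟨x, rfl⟩ | rfl
    · exact (mem_deleteLast c x).1 (h ((mem_deleteLast s x).2 hy))
    · exact absurd hy hs

/-- If the last neuron of `C` is redundant to some `σ ⊆ [n] ∖ {n}` and there is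
a Boolean matrix factorization from `C` onto `D`, then there is a Boolean matrix
factorization from the code `C' = {c ∖ {n} : c ∈ C}` (on one fewer neuron) onto
`D`. -/
theorem BMF_delete_redundant_source (n k : ℕ)
    (C : Finset (Finset (Fin (n + 1)))) (D : Finset (Finset (Fin k)))
    (σ : Finset (Fin (n + 1))) (hσ : Fin.last n ∉ σ)
    (hred : trunk C {Fin.last n} = trunk C σ)
    (h : IsBMF C D) :
    IsBMF (C.image deleteLast) D := by
  classical
  obtain ⟨τ, himg, hsup⟩ := h
  set τ' : Fin k → Finset (Fin n) :=
    fun j => if Fin.last n ∈ τ j then deleteLast (τ j) ∪ deleteLast σ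
             else deleteLast (τ j) with hτ'
  have hlast : ∀ c ∈ C, (Fin.last n ∈ c ↔ σ ⊆ c) := by
    intro c hc
    have h1 := Finset.ext_iff.1 hred c
    simp only [trunk, Finset.mem_filter, hc, true_and,
      Finset.singleton_subset_iff] at h1
    exact h1
  have hdel : ∀ j, deleteLast (τ j) ⊆ τ' j := by
    intro j
    simp only [hτ']
    split
    · exact Finset.subset_union_left
    · exact subset_rfl
  have key : ∀ c ∈ C, ∀ j, (τ' j ⊆ deleteLast c ↔ τ j ⊆ c) := by
    intro c hc j
    by_cases hl : Fin.last n ∈ τ j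
    · simp only [hτ', if_pos hl]
      constructor
      · intro hsub y hy
        rcases Fin.eq_castSucc_or_eq_last y with ⟨x, rfl⟩ | rfl
        · exact (mem_deleteLast _ _).1
            (hsub (Finset.mem_union_left _ ((mem_deleteLast _ _).2 hy)))
        · apply (hlast c hc).2
          rw [subset_iff_deleteLast hσ]
          exact fun x hx => hsub (Finset.mem_union_right _ hx)
      · intro hsub
        apply Finset.union_subset
        · intro x hx
          rw [mem_deleteLast] at hx ⊢
          exact hsub hx
        · rw [← subset_iff_deleteLast hσ]
          exact (hlast c hc).1 (hsub hl)
    · simp only [hτ', if_neg hl]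
      exact (subset_iff_deleteLast hl).symm
  refine ⟨τ', ?_, ?_⟩
  · rw [Finset.image_image, ← himg]
    apply Finset.image_congr
    intro c hc
    simp only [Function.comp_apply]
    apply Finset.filter_congr
    intro j _
    exact key c hc j
  · intro c' hc'
    obtain ⟨c, hc, rfl⟩ := Finset.mem_image.1 hc'
    apply Finset.Subset.antisymm
    · exact Finset.sup_le (s := Finset.univ.filter (fun j => τ' j ⊆ deleteLast c)) (f := τ') (a := deleteLast c) fun j hj => (Finset.mem_filter.1 hj).2
    · intro x hx
      have hxc : x.castSucc ∈ c := (mem_deleteLast _ _).1 hx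
      rw [← hsup c hc, Finset.mem_sup] at hxc
      obtain ⟨j, hj, hxj⟩ := hxc
      rw [Finset.mem_filter] at hj
      have hj' : j ∈ Finset.univ.filter (fun j => τ' j ⊆ deleteLast c) := by
        rw [Finset.mem_filter]
        exact ⟨Finset.mem_univ _, (key c hc j).2 hj.2⟩
      exact Finset.le_sup (f := τ') hj' (hdel j ((mem_deleteLast _ _).2 hxj))
end
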